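/- Let p ∈ (0, 1/2) be fixed. Then as ε → 0⁺, H₂⁻¹(H₂(p) + ε(1 - H₂(p))) = p + ε(1 - H₂(p))/log₂((1-p)/p) - ε²(1 - H₂(p))²·(log₂ e)/(2p(p-1)·(log₂((1-p)/p))³) + O(ε³). -/

import Mathlib

/-!
For any `f` with `f' > 0` and `f'''` bounded near `p`, the solution `x` of `f x = f p + a` is
`x = p + a / f' p - f'' p a² / (2 f' p³) + O(a³)`: by the second-order Taylor expansion, `f` at
this candidate point equals `f p + a + O(a³)`, and `f` is bi-Lipschitz near `p` because `f'` is
bounded below there. For `f = H₂ = binEntropy / log 2` one has `H₂' = log₂ ((1 - x) / x)` and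
`H₂'' = -log₂ e / (x (1 - x))`; take `a = ε (1 - H₂ p)`.
-/

open Set Filter Topology Asymptotics

/-- Binary entropy function. -/
noncomputable def H₂ (x : ℝ) : ℝ := -x * Real.logb 2 x - (1 - x) * Real.logb 2 (1 - x)

theorem mul_abs_sub_le_abs_sub_of_le_deriv {f f' : ℝ → ℝ} {a b m : ℝ}
    (hf : ∀ x ∈ Icc a b, HasDerivAt f (f' x) x) (hm : ∀ x ∈ Icc a b, m ≤ f' x) :
    ∀ x ∈ Icc a b, ∀ y ∈ Icc a b, m * |x - y| ≤ |f x - f y| := by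
  have hmono := (convex_Icc a b).mul_sub_le_image_sub_of_le_deriv
    (fun x hx => (hf x hx).continuousAt.continuousWithinAt)
    (fun x hx => (hf x (interior_subset hx)).differentiableAt.differentiableWithinAt)
    (fun x hx => (hf x (interior_subset hx)).deriv ▸ hm x (interior_subset hx))
  intro x hx y hy
  rcases le_total x y with hxy | hxy
  · rw [abs_sub_comm x, abs_sub_comm (f x), abs_of_nonneg (sub_nonneg.2 hxy)]
    exact (hmono x hx y hy hxy).trans (le_abs_self _)
  · rw [abs_of_nonneg (sub_nonneg.2 hxy)]
    exact (hmono y hy x hx hxy).trans (le_abs_self _)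

theorem isBigO_mul_of_continuousAt {u k : ℝ → ℝ} {l : Filter ℝ} {x₀ : ℝ} (hl : l ≤ 𝓝 x₀)
    (hk : ContinuousAt k x₀) : (fun x => u x * k x) =O[l] u := by
  simpa using (isBigO_refl u l).mul ((hk.tendsto.mono_left hl).isBigO_one ℝ)

theorem abs_le_of_abs_deriv_le_pow {g g' : ℝ → ℝ} {a b C : ℝ} {n : ℕ}
    (hg : ∀ x ∈ Icc a b, HasDerivAt g (g' x) x) (ha : g a = 0)
    (hbound : ∀ x ∈ Icc a b, |g' x| ≤ C * (x - a) ^ n) :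
    ∀ x ∈ Icc a b, |g x| ≤ C / (n + 1) * (x - a) ^ (n + 1) := by
  have hB (x : ℝ) :
      HasDerivAt (fun y => C / (n + 1) * (y - a) ^ (n + 1)) (C * (x - a) ^ n) x := by
    refine ((((hasDerivAt_id x).sub_const a).pow (n + 1)).const_mul
      (C / (n + 1))).congr_deriv ?_
    simp only [Nat.cast_add, Nat.cast_one, id_eq, add_tsub_cancel_right, mul_one]
    field_simp
  intro x hx
  simpa using image_norm_le_of_norm_deriv_right_le_deriv_boundary
    (fun y hy => (hg y hy).continuousAt.continuousWithinAt)
    (fun y hy => (hg y (Ico_subset_Icc_self hy)).hasDerivWithinAt) (by simp [ha]) hB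
    (fun y hy => hbound y (Ico_subset_Icc_self hy)) hx

theorem abs_sub_taylor_two_le {f f' f'' f''' : ℝ → ℝ} {a b M : ℝ}
    (hf : ∀ x ∈ Icc a b, HasDerivAt f (f' x) x) (hf' : ∀ x ∈ Icc a b, HasDerivAt f' (f'' x) x)
    (hf'' : ∀ x ∈ Icc a b, HasDerivAt f'' (f''' x) x) (hM : ∀ x ∈ Icc a b, |f''' x| ≤ M) :
    ∀ x ∈ Icc a b,
      |f x - f a - f' a * (x - a) - f'' a / 2 * (x - a) ^ 2| ≤ M / 6 * (x - a) ^ 3 := by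
  have h2 := abs_le_of_abs_deriv_le_pow (n := 0) (fun x hx => (hf'' x hx).sub_const (f'' a))
    (sub_self _) (by simpa using hM)
  have h1 := abs_le_of_abs_deriv_le_pow (n := 1)
    (fun x hx => ((hf' x hx).sub_const (f' a)).sub
      (((hasDerivAt_id x).sub_const a).const_mul (f'' a)))
    (by simp) (by simpa using h2)
  have h0 := abs_le_of_abs_deriv_le_pow (n := 2)
    (fun x hx => (((hf x hx).sub_const (f a)).sub
      (((hasDerivAt_id x).sub_const a).const_mul (f' a))).sub
      ((((hasDerivAt_id x).sub_const a).pow 2).const_mul (f'' a / 2)))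
    (by simp) (fun x hx => by
      convert h1 x hx using 2
      norm_num
      ring)
  intro x hx
  convert h0 x hx using 1
  norm_num
  ring

theorem isBigO_sub_of_pos_deriv {α : Type*} {l : Filter α} {f f' : ℝ → ℝ} {a b : ℝ}
    {u v : α → ℝ} (hab : a ≤ b) (hf : ∀ x ∈ Icc a b, HasDerivAt f (f' x) x)
    (hf'c : ContinuousOn f' (Icc a b)) (hpos : ∀ x ∈ Icc a b, 0 < f' x)
    (hu : ∀ᶠ t in l, u t ∈ Icc a b) (hv : ∀ᶠ t in l, v t ∈ Icc a b) :
    (fun t => u t - v t) =O[l] fun t => f (u t) - f (v t) := by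
  obtain ⟨x₀, hx₀, hmin⟩ := isCompact_Icc.exists_isMinOn (nonempty_Icc.2 hab) hf'c
  refine IsBigO.of_bound (f' x₀)⁻¹ ?_
  filter_upwards [hu, hv] with t hut hvt
  rw [Real.norm_eq_abs, Real.norm_eq_abs, ← div_eq_inv_mul, le_div_iff₀ (hpos x₀ hx₀), mul_comm]
  exact mul_abs_sub_le_abs_sub_of_le_deriv hf hmin _ hut _ hvt

theorem quadratic_approx_inverse_defect (L c a : ℝ) (hL : L ≠ 0) :
    L * (a * (1 / L - c * a / (2 * L ^ 3))) + c / 2 * (a * (1 / L - c * a / (2 * L ^ 3))) ^ 2 - a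
      = a ^ 3 * (-c ^ 2 / (2 * L ^ 4) + c ^ 3 * a / (8 * L ^ 6)) := by
  field_simp
  ring

theorem isBigO_inverse_sub_taylor {f f' f'' f''' g : ℝ → ℝ} {p b M : ℝ} (hpb : p < b)
    (hf : ∀ x ∈ Icc p b, HasDerivAt f (f' x) x) (hf' : ∀ x ∈ Icc p b, HasDerivAt f' (f'' x) x)
    (hf'' : ∀ x ∈ Icc p b, HasDerivAt f'' (f''' x) x) (hM : ∀ x ∈ Icc p b, |f''' x| ≤ M)
    (hpos : ∀ x ∈ Icc p b, 0 < f' x)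
    (hg : ∀ᶠ a in 𝓝[>] 0, g a ∈ Icc p b ∧ f (g a) = f p + a) :
    (fun a => g a - (p + a / f' p - f'' p * a ^ 2 / (2 * f' p ^ 3))) =O[𝓝[>] 0]
      (fun a => a ^ 3) := by
  have hL : 0 < f' p := hpos p (left_mem_Icc.2 hpb.le)
  have hnhds : 𝓝[>] (0 : ℝ) ≤ 𝓝 0 := nhdsWithin_le_nhds
  set k : ℝ → ℝ := fun a => 1 / f' p - f'' p * a / (2 * f' p ^ 3)
  set h : ℝ → ℝ := fun a => a * k a
  have hk : Continuous k := by fun_prop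
  have hh : Continuous h := by fun_prop
  have h_isBigO : h =O[𝓝[>] 0] (fun a => a) := isBigO_mul_of_continuousAt hnhds hk.continuousAt
  have h_mem : ∀ᶠ a in 𝓝[>] 0, p + h a ∈ Icc p b := by
    have h_small : ∀ᶠ a in 𝓝[>] 0, h a < b - p :=
      (show Tendsto h (𝓝[>] 0) (𝓝 0) by
        simpa [h] using (hh.tendsto 0).mono_left hnhds)
      |>.eventually (gt_mem_nhds (sub_pos.2 hpb))
    have k_pos : ∀ᶠ a in 𝓝[>] 0, 0 < k a :=
      ((hk.tendsto 0).mono_left hnhds).eventually (lt_mem_nhds (by simpa [k] using hL))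
    filter_upwards [h_small, k_pos, self_mem_nhdsWithin] with a ha hka (ha0 : 0 < a)
    constructor <;> nlinarith [mul_pos ha0 hka]
  have expand : (fun a => g a - (p + h a)) =O[𝓝[>] 0] (fun a => f (g a) - f (p + h a)) :=
    isBigO_sub_of_pos_deriv hpb.le hf
      (fun x hx => (hf' x hx).continuousAt.continuousWithinAt) hpos (hg.mono fun _ => And.left)
      h_mem
  have taylor : (fun a => f (p + h a) - f p - f' p * h a - f'' p / 2 * h a ^ 2) =O[𝓝[>] 0]
      (fun a => a ^ 3) := by
    refine IsBigO.trans ?_ (h_isBigO.pow 3)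
    refine IsBigO.of_bound (M / 6) ?_
    filter_upwards [h_mem] with a ha
    have hh0 : 0 ≤ h a := le_add_iff_nonneg_right p |>.1 ha.1
    have := abs_sub_taylor_two_le hf hf' hf'' hM _ ha
    rw [add_sub_cancel_left] at this
    rw [Real.norm_eq_abs, Real.norm_eq_abs, abs_pow, abs_of_nonneg hh0]
    exact this
  have poly : (fun a => f' p * h a + f'' p / 2 * h a ^ 2 - a) =O[𝓝[>] 0] (fun a => a ^ 3) := by
    simp only [h, k, quadratic_approx_inverse_defect _ _ _ hL.ne']
    exact isBigO_mul_of_continuousAt hnhds (by fun_prop)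
  have hfg : (fun a => f (g a) - f (p + h a)) =ᶠ[𝓝[>] 0] fun a =>
      -((f (p + h a) - f p - f' p * h a - f'' p / 2 * h a ^ 2) +
        (f' p * h a + f'' p / 2 * h a ^ 2 - a)) := by
    filter_upwards [hg] with a ⟨_, hfa⟩
    rw [hfa]
    ring
  convert (expand.trans_eventuallyEq hfg).trans (taylor.add poly).neg_left using 3
  simp only [h, k]
  field_simp
  ring

theorem H₂_eq_binEntropy_div : H₂ = fun x => Real.binEntropy x / Real.log 2 := by
  funext x
  simp only [H₂, Real.binEntropy, Real.logb, Real.log_inv]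
  ring

theorem H₂_strictMonoOn : StrictMonoOn H₂ (Icc 0 (1 / 2)) := by
  rw [H₂_eq_binEntropy_div, one_div]
  exact fun x hx y hy hxy =>
    div_lt_div_of_pos_right (Real.binEntropy_strictMonoOn hx hy hxy) (Real.log_pos one_lt_two)

theorem H₂_mem_Icc {x : ℝ} (hx : x ∈ Icc (0 : ℝ) 1) : H₂ x ∈ Icc (0 : ℝ) 1 := by
  have hlog2 := Real.log_pos one_lt_two
  rw [H₂_eq_binEntropy_div, mem_Icc, div_le_one hlog2]
  exact ⟨div_nonneg (Real.binEntropy_nonneg hx.1 hx.2) hlog2.le, Real.binEntropy_le_log_two⟩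

theorem hasDerivAt_log_one_sub_sub_log {x : ℝ} (hx₀ : x ≠ 0) (hx₁ : 1 - x ≠ 0) :
    HasDerivAt (fun x => Real.log (1 - x) - Real.log x) (-(1 - x)⁻¹ - x⁻¹) x := by
  refine ((((hasDerivAt_id x).const_sub 1).log hx₁).sub
    ((hasDerivAt_id x).log hx₀)).congr_deriv ?_
  simp [div_eq_mul_inv]

theorem hasDerivAt_neg_inv_one_sub_sub_inv {x : ℝ} (hx₀ : x ≠ 0) (hx₁ : 1 - x ≠ 0) :
    HasDerivAt (fun x => -(1 - x)⁻¹ - x⁻¹) ((x ^ 2)⁻¹ - ((1 - x) ^ 2)⁻¹) x := by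
  refine ((((hasDerivAt_id x).const_sub 1).inv hx₁).neg.sub
    ((hasDerivAt_id x).inv hx₀)).congr_deriv ?_
  simp only [neg_neg, id_eq, div_eq_mul_inv, one_mul, neg_mul, sub_neg_eq_add]
  ring

theorem abs_inv_sq_sub_inv_one_sub_sq_le {p x : ℝ} (hp : 0 < p) (hpx : p ≤ x)
    (hx : x ≤ 1 - p) :
    |(x ^ 2)⁻¹ - ((1 - x) ^ 2)⁻¹| ≤ (p ^ 2)⁻¹ := by
  have inv_sq_le {y : ℝ} (hy : p ≤ y) : (y ^ 2)⁻¹ ≤ (p ^ 2)⁻¹ :=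
    inv_anti₀ (by positivity) (pow_le_pow_left₀ hp.le hy 2)
  exact abs_sub_le_of_nonneg_of_le (by positivity) (inv_sq_le hpx) (by positivity)
    (inv_sq_le (by linarith))

theorem hasDerivAt_H₂ {x : ℝ} (hx₀ : x ≠ 0) (hx₁ : x ≠ 1) :
    HasDerivAt H₂ ((Real.log (1 - x) - Real.log x) / Real.log 2) x := by
  rw [H₂_eq_binEntropy_div]
  exact (Real.hasDerivAt_binEntropy hx₀ hx₁).div_const _

theorem eventually_H₂_inverse_mem_Icc {p b : ℝ} (hp0 : 0 < p) (hpb : p < b) (hb : b ≤ 1 / 2)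
    {Hinv : ℝ → ℝ}
    (hinv_mem : ∀ y ∈ Icc (0 : ℝ) 1, Hinv y ∈ Icc (0 : ℝ) (1 / 2))
    (hinv_right : ∀ y ∈ Icc (0 : ℝ) 1, H₂ (Hinv y) = y) :
    ∀ᶠ a in 𝓝[>] 0, Hinv (H₂ p + a) ∈ Icc p b ∧ H₂ (Hinv (H₂ p + a)) = H₂ p + a := by
  have hp : p ∈ Icc (0 : ℝ) (1 / 2) := ⟨hp0.le, hpb.le.trans hb⟩
  have hb' : b ∈ Icc (0 : ℝ) (1 / 2) := ⟨hp0.le.trans hpb.le, hb⟩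
  have hgap : 0 < H₂ b - H₂ p := sub_pos.2 (H₂_strictMonoOn hp hb' hpb)
  filter_upwards [Ioo_mem_nhdsGT hgap] with a ⟨ha0, hab⟩
  have hy : H₂ p + a ∈ Icc (0 : ℝ) 1 :=
    ⟨by linarith [(H₂_mem_Icc ⟨hp.1, by linarith [hp.2]⟩).1],
      by linarith [(H₂_mem_Icc ⟨hb'.1, by linarith [hb'.2]⟩).2]⟩
  have hx := hinv_mem _ hy
  have hHx := hinv_right _ hy
  refine ⟨⟨?_, ?_⟩, hHx⟩
  · exact (H₂_strictMonoOn.le_iff_le hp hx).1 (by linarith)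
  · exact (H₂_strictMonoOn.le_iff_le hx hb').1 (by linarith)

theorem exists_bound_of_isBigO_nhdsGT {u : ℝ → ℝ} {n : ℕ}
    (h : u =O[𝓝[>] 0] fun ε => ε ^ n) :
    ∃ C > 0, ∃ δ > 0, ∀ ε : ℝ, 0 < ε → ε < δ → |u ε| ≤ C * ε ^ n := by
  obtain ⟨C, hC, hCu⟩ := h.exists_pos
  obtain ⟨δ, hδ, hδu⟩ := (nhdsGT_basis (0 : ℝ)).eventually_iff.1 hCu.bound
  refine ⟨C, hC, δ, hδ, fun ε hε hεδ => ?_⟩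
  simpa [abs_of_pos hε] using hδu ⟨hε, hεδ⟩

theorem isBigO_H₂_inverse_sub_taylor {p : ℝ} (hp0 : 0 < p) (hp : p < 1 / 2) {Hinv : ℝ → ℝ}
    (hinv_mem : ∀ y ∈ Icc (0 : ℝ) 1, Hinv y ∈ Icc (0 : ℝ) (1 / 2))
    (hinv_right : ∀ y ∈ Icc (0 : ℝ) 1, H₂ (Hinv y) = y) :
    (fun a => Hinv (H₂ p + a) -
      (p + a / ((Real.log (1 - p) - Real.log p) / Real.log 2) -
        (-(1 - p)⁻¹ - p⁻¹) / Real.log 2 * a ^ 2 /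
          (2 * ((Real.log (1 - p) - Real.log p) / Real.log 2) ^ 3))) =O[𝓝[>] 0]
      fun a => a ^ 3 := by
  obtain ⟨b, hpb, hb⟩ := exists_between hp
  have hlog2 : 0 < Real.log 2 := Real.log_pos one_lt_two
  have hne {x : ℝ} (hx : x ∈ Icc p b) : x ≠ 0 ∧ 1 - x ≠ 0 :=
    ⟨(hp0.trans_le hx.1).ne', by linarith [hx.2]⟩
  exact isBigO_inverse_sub_taylor
    (f''' := fun x => ((x ^ 2)⁻¹ - ((1 - x) ^ 2)⁻¹) / Real.log 2) hpb
    (fun x hx => hasDerivAt_H₂ (hne hx).1 (sub_ne_zero.1 (hne hx).2).symm)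
    (fun x hx => (hasDerivAt_log_one_sub_sub_log (hne hx).1 (hne hx).2).div_const _)
    (fun x hx => (hasDerivAt_neg_inv_one_sub_sub_inv (hne hx).1 (hne hx).2).div_const _)
    (fun x hx => by
      rw [abs_div, abs_of_pos hlog2]
      exact div_le_div_of_nonneg_right
        (abs_inv_sq_sub_inv_one_sub_sq_le hp0 hx.1 (by linarith [hx.2])) hlog2.le)
    (fun x hx =>
      div_pos (sub_pos.2 (Real.log_lt_log (hp0.trans_le hx.1) (by linarith [hx.2]))) hlog2)
    (eventually_H₂_inverse_mem_Icc hp0 hpb hb.le hinv_mem hinv_right)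

theorem stmt_4_general (p : ℝ) (hp0 : 0 < p) (hp : p < 1/2)
    (Hinv : ℝ → ℝ)
    (hinv_mem : ∀ y ∈ Set.Icc (0 : ℝ) 1, Hinv y ∈ Set.Icc (0 : ℝ) (1/2))
    (hinv_right : ∀ y ∈ Set.Icc (0 : ℝ) 1, H₂ (Hinv y) = y) :
    ∃ C > 0, ∃ δ > 0, ∀ ε : ℝ, 0 < ε → ε < δ →
      |Hinv (H₂ p + ε * (1 - H₂ p))
        - (p + ε * (1 - H₂ p) / Real.logb 2 ((1 - p) / p)
          - ε ^ 2 * (1 - H₂ p) ^ 2 * Real.logb 2 (Real.exp 1)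
            / (2 * p * (p - 1) * (Real.logb 2 ((1 - p) / p)) ^ 3))|
        ≤ C * ε ^ 3 := by
  have hlog2 : 0 < Real.log 2 := Real.log_pos one_lt_two
  have expansion := isBigO_H₂_inverse_sub_taylor hp0 hp hinv_mem hinv_right
  have hE : 0 < 1 - H₂ p := by
    rw [sub_pos, H₂_eq_binEntropy_div, div_lt_one hlog2]
    exact Real.binEntropy_lt_log_two.2 (by linarith)
  have hscale : Tendsto (fun ε => ε * (1 - H₂ p)) (𝓝[>] 0) (𝓝[>] 0) := by
    refine tendsto_nhdsWithin_iff.2 ⟨?_, ?_⟩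
    · exact ((continuous_mul_const _).tendsto' 0 0 (zero_mul _)).mono_left nhdsWithin_le_nhds
    · filter_upwards [self_mem_nhdsWithin] with ε (hε : 0 < ε)
      exact mul_pos hε hE
  have hscale_isBigO : (fun ε => ε * (1 - H₂ p)) =O[𝓝[>] 0] fun ε => ε :=
    isBigO_mul_of_continuousAt nhdsWithin_le_nhds continuousAt_const
  refine exists_bound_of_isBigO_nhdsGT
    (((expansion.comp_tendsto hscale).trans (hscale_isBigO.pow 3)).congr_left fun ε => ?_)
  have hL : Real.log (1 - p) - Real.log p ≠ 0 :=
    (sub_pos.2 (Real.log_lt_log hp0 (by linarith))).ne'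
  have h1p : 1 - p ≠ 0 := by linarith
  have hp1 : p - 1 ≠ 0 := by linarith
  simp only [Function.comp, Real.logb, Real.log_div h1p hp0.ne', Real.log_exp]
  congr 1
  field_simp
  ring

theorem stmt_4 (p : ℝ) (hp0 : 0 < p) (hp : p < 1/2)
    (Hinv : ℝ → ℝ)
    (hinv_mem : ∀ y ∈ Set.Icc (0 : ℝ) 1, Hinv y ∈ Set.Icc (0 : ℝ) (1/2))
    (hinv_left : ∀ x ∈ Set.Icc (0 : ℝ) (1/2), Hinv (H₂ x) = x)
    (hinv_right : ∀ y ∈ Set.Icc (0 : ℝ) 1, H₂ (Hinv y) = y) :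
    ∃ C > 0, ∃ δ > 0, ∀ ε : ℝ, 0 < ε → ε < δ →
      |Hinv (H₂ p + ε * (1 - H₂ p))
        - (p + ε * (1 - H₂ p) / Real.logb 2 ((1 - p) / p)
          - ε ^ 2 * (1 - H₂ p) ^ 2 * Real.logb 2 (Real.exp 1)
            / (2 * p * (p - 1) * (Real.logb 2 ((1 - p) / p)) ^ 3))|
        ≤ C * ε ^ 3 :=
  stmt_4_general p hp0 hp Hinv hinv_mem hinv_right
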